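/- Let N be a positive integer and let L² be the Hilbert space of square-integrable complex functions on [0,1)^N with Lebesgue measure. The bounded operator (𝒜u)(k) = Σ_{α ⊆ {1,...,N}} ∫_{[0,1)^{|α|}} u(k with coordinates in α replaced by x_α) dx_α is invertible, and its inverse is (𝒜^{-1}u)(k) = Σ_{α ⊆ {1,...,N}} (−1/2)^{|α|} ∫_{[0,1)^{|α|}} u(k with coordinates in α replaced by x_α) dx_α. -/

import Mathlib

/-!
Write `P_α` for integration over the coordinates in `α`. By Fubini, `P_α (P_β u) = P_(α ∪ β) u`
almost everywhere for integrable `u`, and `P_∅ = id`. Hence the operators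
`T_a = ∑_α a^|α| P_α` satisfy `T_a T_b = T_(a + b + ab)`: a pair `(α, β)` with `α ∪ β = γ`
puts each point of `γ` in `α` only, in `β` only, or in both. For `{a, b} = {1, -1/2}` we get
`a + b + ab = 0`, and `T_0 = P_∅` is the identity.
-/

open MeasureTheory

/-- The cube `[0,1)^ι` with Lebesgue measure, modelled as the product of the
Lebesgue measure on `ℝ` restricted to `[0,1)` over each coordinate. -/
noncomputable def cubeMeasure (ι : Type*) [Fintype ι] : Measure (ι → ℝ) :=
  Measure.pi fun _ => (volume : Measure ℝ).restrict (Set.Ico 0 1)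

/-- `∫_{[0,1)^{|α|}} u(k with the coordinates in α replaced by x_α) dx_α`:
integration of `u` over the coordinates indexed by `α`, the remaining
coordinates being those of `k`.  For `α = ∅` this is `u k`. -/
noncomputable def partialIntegral {N : ℕ} (α : Finset (Fin N))
    (u : (Fin N → ℝ) → ℂ) (k : Fin N → ℝ) : ℂ :=
  ∫ x : {j // j ∈ α} → ℝ, u (fun j => if h : j ∈ α then x ⟨j, h⟩ else k j)
    ∂(cubeMeasure {j // j ∈ α})

open Finset Function

instance : IsProbabilityMeasure ((volume : Measure ℝ).restrict (Set.Ico 0 1)) :=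
  ⟨by simp⟩

instance (ι : Type*) [Fintype ι] : IsProbabilityMeasure (cubeMeasure ι) := by
  unfold cubeMeasure; infer_instance

namespace Finset

variable {ι R : Type*} [Fintype ι] [DecidableEq ι] [CommSemiring R]

theorem sum_pow_card_mul_pow_card_of_union_eq (a b : R) (γ : Finset ι) :
    ∑ p : Finset ι × Finset ι with p.1 ∪ p.2 = γ, a ^ #p.1 * b ^ #p.2 = (a + b + a * b) ^ #γ := by
  -- `(α, β)` with `α ∪ β = γ` is `((γ \ β) ∪ s, β)` for a unique `s ⊆ β`
  have reindex : ∑ p : Finset ι × Finset ι with p.1 ∪ p.2 = γ, a ^ #p.1 * b ^ #p.2 =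
      ∑ q ∈ γ.powerset.sigma powerset, a ^ #q.2 * (a ^ #(γ \ q.1) * b ^ #q.1) := by
    refine sum_bij' (fun p _ => ⟨p.2, p.1 ∩ p.2⟩) (fun q _ => ((γ \ q.1) ∪ q.2, q.1))
      ?_ ?_ ?_ ?_ ?_
    · intro p hp
      rw [mem_filter_univ] at hp
      simp only [mem_sigma, mem_powerset]
      exact ⟨hp ▸ subset_union_right, inter_subset_right⟩
    · intro q hq
      simp only [mem_sigma, mem_powerset] at hq
      rw [mem_filter_univ, union_assoc, union_eq_right.2 hq.2, sdiff_union_of_subset hq.1]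
    · intro p hp
      rw [mem_filter_univ] at hp
      rw [← hp, union_sdiff_right, sdiff_union_inter]
    · intro q hq
      simp only [mem_sigma, mem_powerset] at hq
      rw [union_inter_distrib_right, sdiff_inter_self, empty_union, inter_eq_left.2 hq.2]
    · intro p hp
      rw [mem_filter_univ] at hp
      rw [← hp, union_sdiff_right, mul_left_comm, ← mul_assoc, ← pow_add,
        card_sdiff_add_card_inter]
  have inner (β : Finset ι) : ∑ s ∈ β.powerset, a ^ #s = (a + 1) ^ #β := by
    simpa using sum_pow_mul_eq_add_pow a 1 β
  rw [reindex, sum_sigma]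
  simp_rw [← sum_mul, inner]
  calc ∑ β ∈ γ.powerset, (a + 1) ^ #β * (a ^ #(γ \ β) * b ^ #β)
      = ∑ β ∈ γ.powerset, (b * (a + 1)) ^ #β * a ^ (#γ - #β) :=
        sum_congr rfl fun β hβ => by
          rw [card_sdiff_of_subset (mem_powerset.1 hβ), mul_pow]; ring
    _ = (a + b + a * b) ^ #γ := by
        rw [sum_pow_mul_eq_add_pow]; ring

theorem sum_sum_pow_card_mul_pow_card_mul_union (a b : R) (f : Finset ι → R) :
    ∑ α, ∑ β, a ^ #α * b ^ #β * f (α ∪ β) = ∑ γ, (a + b + a * b) ^ #γ * f γ := by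
  rw [← sum_product', ← sum_fiberwise_of_maps_to (g := fun p => p.1 ∪ p.2)
    (fun p _ => mem_univ (p.1 ∪ p.2))]
  refine sum_congr rfl fun γ _ => ?_
  rw [← sum_pow_card_mul_pow_card_of_union_eq, sum_mul]
  exact sum_congr rfl fun p hp => by rw [(mem_filter_univ p).1 hp]

end Finset

section CoordSplit

variable {ι : Type*} [DecidableEq ι] (α : Finset ι)

noncomputable def coordSplit : (ι → ℝ) ≃ᵐ ({j // j ∉ α} → ℝ) × ({j // j ∈ α} → ℝ) :=
  (MeasurableEquiv.piEquivPiSubtypeProd (fun _ => ℝ) (· ∈ α)).trans MeasurableEquiv.prodComm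

theorem coordSplit_symm_fst_apply (k : ι → ℝ) (x : {j // j ∈ α} → ℝ) :
    (coordSplit α).symm ((coordSplit α k).1, x) = updateFinset k α x := by
  ext j
  by_cases h : j ∈ α <;>
    simp [coordSplit, MeasurableEquiv.piEquivPiSubtypeProd, Equiv.piEquivPiSubtypeProd,
      MeasurableEquiv.prodComm, updateFinset, h]

variable [Fintype ι]

theorem measurePreserving_coordSplit :
    MeasurePreserving (coordSplit α) (cubeMeasure ι)
      ((cubeMeasure {j // j ∉ α}).prod (cubeMeasure {j // j ∈ α})) := by
  refine Measure.measurePreserving_swap.comp ?_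
  unfold cubeMeasure
  convert measurePreserving_piEquivPiSubtypeProd
    (fun _ : ι => (volume : Measure ℝ).restrict (Set.Ico 0 1)) (· ∈ α)
  rfl

theorem measurePreserving_coordSplit_fst :
    MeasurePreserving (fun k => (coordSplit α k).1) (cubeMeasure ι) (cubeMeasure {j // j ∉ α}) :=
  measurePreserving_fst.comp (measurePreserving_coordSplit α)

theorem ae_integrable_updateFinset {u : (ι → ℝ) → ℂ}
    (hu : Integrable u (cubeMeasure ι)) :
    ∀ᵐ k ∂cubeMeasure ι,
      Integrable (fun x => u (updateFinset k α x)) (cubeMeasure {j // j ∈ α}) := by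
  have hslices := (((measurePreserving_coordSplit α).symm _).integrable_comp_emb
    (MeasurableEquiv.measurableEmbedding _)).2 hu |>.prod_right_ae
  filter_upwards [(measurePreserving_coordSplit_fst α).quasiMeasurePreserving.ae hslices] with k hk
  simpa only [Function.comp_def, coordSplit_symm_fst_apply] using hk

end CoordSplit

section PartialIntegral

variable {N : ℕ} {u v : (Fin N → ℝ) → ℂ}

theorem partialIntegral_eq_integral_updateFinset (α : Finset (Fin N)) (u : (Fin N → ℝ) → ℂ)
    (k : Fin N → ℝ) :
    partialIntegral α u k = ∫ x, u (updateFinset k α x) ∂cubeMeasure {j // j ∈ α} :=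
  rfl

theorem partialIntegral_eq_integral_coordSplit (α : Finset (Fin N)) (u : (Fin N → ℝ) → ℂ)
    (k : Fin N → ℝ) :
    partialIntegral α u k =
      ∫ x, u ((coordSplit α).symm ((coordSplit α k).1, x)) ∂cubeMeasure {j // j ∈ α} := by
  simp only [coordSplit_symm_fst_apply, partialIntegral_eq_integral_updateFinset]

theorem partialIntegral_empty (u : (Fin N → ℝ) → ℂ) : partialIntegral ∅ u = u := by
  ext k
  simp [partialIntegral_eq_integral_updateFinset]

theorem partialIntegral_congr_ae (α : Finset (Fin N)) (h : u =ᵐ[cubeMeasure (Fin N)] v) :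
    partialIntegral α u =ᵐ[cubeMeasure (Fin N)] partialIntegral α v := by
  have hslices : ∀ᵐ t ∂cubeMeasure {j // j ∉ α}, ∀ᵐ x ∂cubeMeasure {j // j ∈ α},
      u ((coordSplit α).symm (t, x)) = v ((coordSplit α).symm (t, x)) :=
    Measure.ae_ae_of_ae_prod
      (((measurePreserving_coordSplit α).symm _).quasiMeasurePreserving.ae_eq_comp h)
  filter_upwards [(measurePreserving_coordSplit_fst α).quasiMeasurePreserving.ae hslices]
    with k hk
  simp only [partialIntegral_eq_integral_coordSplit]
  exact integral_congr_ae hk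

theorem integrable_partialIntegral (hu : Integrable u (cubeMeasure (Fin N)))
    (α : Finset (Fin N)) : Integrable (partialIntegral α u) (cubeMeasure (Fin N)) := by
  have hG := (((measurePreserving_coordSplit α).symm _).integrable_comp_emb
    (MeasurableEquiv.measurableEmbedding _)).2 hu |>.integral_prod_left
  convert (measurePreserving_coordSplit_fst α).integrable_comp_of_integrable hG using 1
  ext k
  exact partialIntegral_eq_integral_coordSplit α u k

theorem partialIntegral_partialIntegral_of_subset {α β : Finset (Fin N)} (h : α ⊆ β)
    (u : (Fin N → ℝ) → ℂ) :
    partialIntegral α (partialIntegral β u) = partialIntegral β u := by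
  ext k
  simp [partialIntegral_eq_integral_updateFinset, updateFinset_updateFinset_of_subset h]

theorem partialIntegral_partialIntegral_of_disjoint (hu : Integrable u (cubeMeasure (Fin N)))
    {α β : Finset (Fin N)} (h : Disjoint α β) :
    partialIntegral α (partialIntegral β u) =ᵐ[cubeMeasure (Fin N)] partialIntegral (α ∪ β) u := by
  have hunion : MeasurePreserving (MeasurableEquiv.piFinsetUnion (fun _ => ℝ) h)
      ((cubeMeasure {j // j ∈ α}).prod (cubeMeasure {j // j ∈ β}))
      (cubeMeasure {j // j ∈ α ∪ β}) := by
    unfold cubeMeasure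
    convert measurePreserving_piFinsetUnion h
      (fun _ : Fin N => (volume : Measure ℝ).restrict (Set.Ico 0 1))
  filter_upwards [ae_integrable_updateFinset (α ∪ β) hu] with k hk
  simp only [partialIntegral_eq_integral_updateFinset, updateFinset_updateFinset h]
  rw [← hunion.integral_comp']
  exact (integral_prod _
    ((hunion.integrable_comp_emb (MeasurableEquiv.measurableEmbedding _)).2 hk)).symm

theorem partialIntegral_partialIntegral (hu : Integrable u (cubeMeasure (Fin N)))
    (α β : Finset (Fin N)) :
    partialIntegral α (partialIntegral β u) =ᵐ[cubeMeasure (Fin N)] partialIntegral (α ∪ β) u :=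
  calc partialIntegral α (partialIntegral β u)
      = partialIntegral (α \ β ∪ α ∩ β) (partialIntegral β u) := by rw [sdiff_union_inter]
    _ =ᵐ[cubeMeasure (Fin N)]
        partialIntegral (α \ β) (partialIntegral (α ∩ β) (partialIntegral β u)) :=
        (partialIntegral_partialIntegral_of_disjoint (integrable_partialIntegral hu β)
          (disjoint_sdiff_inter α β)).symm
    _ = partialIntegral (α \ β) (partialIntegral β u) := by
        rw [partialIntegral_partialIntegral_of_subset inter_subset_right]
    _ =ᵐ[cubeMeasure (Fin N)] partialIntegral (α \ β ∪ β) u :=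
        partialIntegral_partialIntegral_of_disjoint hu sdiff_disjoint
    _ = partialIntegral (α ∪ β) u := by rw [sdiff_union_self_eq_union]

theorem partialIntegral_sum_mul {κ : Type*} (s : Finset κ) (c : κ → ℂ)
    {f : κ → (Fin N → ℝ) → ℂ} (hf : ∀ i ∈ s, Integrable (f i) (cubeMeasure (Fin N)))
    (α : Finset (Fin N)) :
    partialIntegral α (fun k => ∑ i ∈ s, c i * f i k) =ᵐ[cubeMeasure (Fin N)]
      fun k => ∑ i ∈ s, c i * partialIntegral α (f i) k := by
  have hslices : ∀ᵐ k ∂cubeMeasure (Fin N), ∀ i ∈ s,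
      Integrable (fun x => f i (updateFinset k α x)) (cubeMeasure {j // j ∈ α}) :=
    (Filter.eventually_all_finset s).2 fun i hi => ae_integrable_updateFinset α (hf i hi)
  filter_upwards [hslices] with k hk
  simp only [partialIntegral_eq_integral_updateFinset]
  rw [integral_finsetSum s fun i hi => (hk i hi).const_mul (c i)]
  simp only [integral_const_mul]

end PartialIntegral

section PartialIntegralSum

variable {N : ℕ} {u v : (Fin N → ℝ) → ℂ}

noncomputable def partialIntegralSum (a : ℂ) (u : (Fin N → ℝ) → ℂ) (k : Fin N → ℝ) : ℂ :=
  ∑ α : Finset (Fin N), a ^ #α * partialIntegral α u k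

theorem partialIntegralSum_zero (u : (Fin N → ℝ) → ℂ) : partialIntegralSum 0 u = u := by
  ext k
  rw [partialIntegralSum, sum_eq_single ∅ (fun α _ hα => by simp [hα]) (by simp),
    partialIntegral_empty]
  simp

theorem partialIntegralSum_congr_ae (a : ℂ) (h : u =ᵐ[cubeMeasure (Fin N)] v) :
    partialIntegralSum a u =ᵐ[cubeMeasure (Fin N)] partialIntegralSum a v := by
  filter_upwards [Filter.eventually_all.2 fun α => partialIntegral_congr_ae α h] with k hk
  simp only [partialIntegralSum, hk]

theorem partialIntegralSum_partialIntegralSum (hu : Integrable u (cubeMeasure (Fin N)))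
    (a b : ℂ) :
    partialIntegralSum a (partialIntegralSum b u) =ᵐ[cubeMeasure (Fin N)]
      partialIntegralSum (a + b + a * b) u := by
  have hlin : ∀ᵐ k ∂cubeMeasure (Fin N), ∀ α, partialIntegral α (partialIntegralSum b u) k =
      ∑ β, b ^ #β * partialIntegral α (partialIntegral β u) k :=
    Filter.eventually_all.2 fun α =>
      partialIntegral_sum_mul univ _ (fun β _ => integrable_partialIntegral hu β) α
  have hcomp := Filter.eventually_all.2 fun α =>
    Filter.eventually_all.2 fun β => partialIntegral_partialIntegral hu α β
  filter_upwards [hlin, hcomp] with k hlin hcomp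
  simp only [partialIntegralSum, hlin, hcomp, mul_sum, ← mul_assoc]
  exact sum_sum_pow_card_mul_pow_card_mul_union a b (partialIntegral · u k)

end PartialIntegralSum

theorem mul_eq_one_of_ae_eq_partialIntegralSum {N : ℕ} {a b : ℂ} (hab : a + b + a * b = 0)
    {T S : Lp ℂ 2 (cubeMeasure (Fin N)) →L[ℂ] Lp ℂ 2 (cubeMeasure (Fin N))}
    (hT : ∀ u, ⇑(T u) =ᵐ[cubeMeasure (Fin N)] partialIntegralSum a u)
    (hS : ∀ u, ⇑(S u) =ᵐ[cubeMeasure (Fin N)] partialIntegralSum b u) :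
    T * S = 1 := by
  ext1 u
  refine Lp.ext ?_
  calc ⇑(T (S u))
      =ᵐ[cubeMeasure (Fin N)] partialIntegralSum a (S u) := hT (S u)
    _ =ᵐ[cubeMeasure (Fin N)] partialIntegralSum a (partialIntegralSum b u) :=
        partialIntegralSum_congr_ae a (hS u)
    _ =ᵐ[cubeMeasure (Fin N)] partialIntegralSum (a + b + a * b) u :=
        partialIntegralSum_partialIntegralSum ((Lp.memLp u).integrable one_le_two) a b
    _ = u := by rw [hab, partialIntegralSum_zero]

theorem stmt_13_general (N : ℕ)
    (𝒜 ℬ : Lp ℂ 2 (cubeMeasure (Fin N)) →L[ℂ] Lp ℂ 2 (cubeMeasure (Fin N)))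
    (h𝒜 : ∀ u : Lp ℂ 2 (cubeMeasure (Fin N)),
      ⇑(𝒜 u) =ᵐ[cubeMeasure (Fin N)] fun k =>
        ∑ α : Finset (Fin N), partialIntegral α (⇑u) k)
    (hℬ : ∀ u : Lp ℂ 2 (cubeMeasure (Fin N)),
      ⇑(ℬ u) =ᵐ[cubeMeasure (Fin N)] fun k =>
        ∑ α : Finset (Fin N), (-(1:ℂ)/2) ^ α.card * partialIntegral α (⇑u) k) :
    𝒜 * ℬ = 1 ∧ ℬ * 𝒜 = 1 := by
  have h𝒜' : ∀ u, ⇑(𝒜 u) =ᵐ[cubeMeasure (Fin N)] partialIntegralSum 1 u := fun u =>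
    (h𝒜 u).trans (.of_forall fun k => by simp [partialIntegralSum])
  exact ⟨mul_eq_one_of_ae_eq_partialIntegralSum (by norm_num) h𝒜' hℬ,
    mul_eq_one_of_ae_eq_partialIntegralSum (by norm_num) hℬ h𝒜'⟩

/-- the operator `𝒜u = Σ_{α ⊆ {1,...,N}} ∫_{[0,1)^{|α|}} u dx_α`
is invertible, with inverse `Σ_α (−1/2)^{|α|} ∫_{[0,1)^{|α|}} · dx_α`. -/
theorem stmt_13 (N : ℕ) (hN : 0 < N)
    (𝒜 ℬ : Lp ℂ 2 (cubeMeasure (Fin N)) →L[ℂ] Lp ℂ 2 (cubeMeasure (Fin N)))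
    (h𝒜 : ∀ u : Lp ℂ 2 (cubeMeasure (Fin N)),
      ⇑(𝒜 u) =ᵐ[cubeMeasure (Fin N)] fun k =>
        ∑ α : Finset (Fin N), partialIntegral α (⇑u) k)
    (hℬ : ∀ u : Lp ℂ 2 (cubeMeasure (Fin N)),
      ⇑(ℬ u) =ᵐ[cubeMeasure (Fin N)] fun k =>
        ∑ α : Finset (Fin N), (-(1:ℂ)/2) ^ α.card * partialIntegral α (⇑u) k) :
    𝒜 * ℬ = 1 ∧ ℬ * 𝒜 = 1 :=
  stmt_13_general N 𝒜 ℬ h𝒜 hℬ
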